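/- For all d ≥ 1, m ≥ 0, r ≥ 2 and all k ≥ r + m: PH^d_k(m,r) ≤ 2_{d-1}(r^{d^2}·k) + m, and hence PH^d_k(m,r) ≤ 2_{d-1}((r^{d^2}+1)·k). -/

import Mathlib

/-!
Erdős–Rado stepping up. If `Y` has `N + 1` elements and is end-homogeneous for a colouring of
the `(d+2)`-sets (the colour of `s ∪ {a}`, `a > max s`, depends only on `s`), then a set
homogeneous for the `(d+1)`-colouring `s ↦ C (s ∪ {max Y})` of `Y \ {max Y}` is homogeneous
for `C`. Such a `Y` is grown greedily: the least remaining candidate joins `Y`, and the other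
candidates are cut down to one class of the colour pattern they form with it; there are at
most `r ^ N ^ d` patterns. Hence `N → (k)^{d+1}_r` gives
`(r^{(N+1)^d} + 1)^{N+1} → (k)^{d+2}_r`, and starting from the pigeonhole principle
`r k → (k)^1_r` these bounds stay below the tower `2_{d-1}(r^{d²} k)`. Since the required size
`k` does not depend on `min H`, any interval `{m, …, R}` with that many elements witnesses
`PH^d_k(m, r)`.
-/

/-- Tower function: `tower 0 i = i`, `tower (n+1) i = 2 ^ tower n i`. -/
def tower : ℕ → ℕ → ℕ
  | 0, i => i
  | n+1, i => 2 ^ tower n i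

/-- `PHProp f d m r R` : every colouring of the `d`-element subsets of `{m,…,R}` with
`r` colours admits a homogeneous `H ⊆ {m,…,R}` with `|H| ≥ f(min H)`. -/
def PHProp (f : ℕ → ℕ) (d m r R : ℕ) : Prop :=
  ∀ C : Finset ℕ → ℕ,
    (∀ s ⊆ Finset.Icc m R, s.card = d → C s < r) →
    ∃ H : Finset ℕ, H ⊆ Finset.Icc m R ∧ H.Nonempty ∧ f (sInf (H : Set ℕ)) ≤ H.card ∧
      ∀ s ⊆ H, ∀ t ⊆ H, s.card = d → t.card = d → C s = C t

/-- `PHnum f d m r` : the least `R` witnessing the Paris–Harrington theorem `PH_f^d(m,r)`. -/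
noncomputable def PHnum (f : ℕ → ℕ) (d m r : ℕ) : ℕ := sInf {R | PHProp f d m r R}

theorem tower_mono (j : ℕ) : Monotone (tower j) := by
  induction j with
  | zero => exact fun _ _ h => h
  | succ j ih => exact fun _ _ h => Nat.pow_le_pow_right two_pos (ih h)

theorem add_le_two_pow_mul {y T : ℕ} (hT : 1 ≤ T) : y + T ≤ 2 ^ y * T := by
  nlinarith [Nat.lt_two_pow_self (n := y)]

theorem two_pow_mul_tower_succ_le (i x y : ℕ) :
    2 ^ y * tower (i + 1) x ≤ tower (i + 1) (x + y) := by
  induction i with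
  | zero => exact (pow_add 2 x y ▸ mul_comm (2 ^ y) (2 ^ x)).le
  | succ i ih =>
    calc 2 ^ y * tower (i + 2) x = 2 ^ (y + tower (i + 1) x) := (pow_add 2 _ _).symm
      _ ≤ 2 ^ (2 ^ y * tower (i + 1) x) :=
        Nat.pow_le_pow_right two_pos (add_le_two_pow_mul Nat.one_le_two_pow)
      _ ≤ tower (i + 2) (x + y) := Nat.pow_le_pow_right two_pos ih

theorem tower_add_le (j x y : ℕ) : tower j x + y ≤ tower j (x + y) := by
  cases j with
  | zero => exact le_rfl
  | succ i =>
    calc tower (i + 1) x + y = y + tower (i + 1) x := add_comm _ _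
      _ ≤ 2 ^ y * tower (i + 1) x := add_le_two_pow_mul Nat.one_le_two_pow
      _ ≤ tower (i + 1) (x + y) := two_pow_mul_tower_succ_le i x y

theorem add_mul_tower_le (j : ℕ) {a b c x : ℕ} (hx : 1 ≤ x) (habc : a + b < c) :
    a + b * tower j x ≤ tower j (c * x) := by
  cases j with
  | zero => show a + b * x ≤ c * x; nlinarith
  | succ i =>
    have hT : 1 ≤ tower (i + 1) x := Nat.one_le_two_pow
    have hc : c ≤ 2 ^ ((c - 1) * x) :=
      calc c ≤ 2 ^ (c - 1) := by have := Nat.lt_two_pow_self (n := c - 1); omega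
        _ ≤ 2 ^ ((c - 1) * x) := Nat.pow_le_pow_right two_pos (Nat.le_mul_of_pos_right _ hx)
    calc a + b * tower (i + 1) x ≤ c * tower (i + 1) x := by nlinarith
      _ ≤ 2 ^ ((c - 1) * x) * tower (i + 1) x := Nat.mul_le_mul_right _ hc
      _ ≤ tower (i + 1) (x + (c - 1) * x) := two_pow_mul_tower_succ_le i x _
      _ ≤ tower (i + 1) (c * x) := tower_mono _ (by
          rcases c with _ | c
          · omega
          · simp only [Nat.add_sub_cancel]; nlinarith)

theorem add_lt_pow_succ {r m : ℕ} (hr : 2 ≤ r) (hm : 1 ≤ m) : r + m < r ^ (m + 1) := by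
  have h1 : 2 ^ m ≤ r ^ m := Nat.pow_le_pow_left hr m
  have h2 : m < 2 ^ m := Nat.lt_two_pow_self
  rw [pow_succ]
  nlinarith

theorem mul_tower_add_one_pow_le (e : ℕ) {r x : ℕ} (hr : 2 ≤ r) (hx : 1 ≤ x) :
    r * (tower e x + 1) ^ (e + 1) ≤ tower e (r ^ (2 * e + 3) * x) := by
  cases e with
  | zero =>
    calc r * (tower 0 x + 1) ^ 1 = r + r * tower 0 x := by ring
      _ ≤ tower 0 (r ^ 3 * x) := add_mul_tower_le 0 hx (by rw [pow_succ, sq]; nlinarith)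
  | succ i =>
    rw [show 2 * (i + 1) + 3 = 2 * i + 4 + 1 by ring]
    set v := tower i x
    have hr2 : r ≤ 2 ^ r := Nat.lt_two_pow_self.le
    calc r * (2 ^ v + 1) ^ (i + 2) ≤ 2 ^ r * (2 ^ (v + 1)) ^ (i + 2) := by
          gcongr; rw [pow_succ]; have : 1 ≤ 2 ^ v := Nat.one_le_two_pow; omega
      _ = 2 ^ ((r + (i + 2)) + (i + 2) * v) := by rw [← pow_mul, ← pow_add]; ring_nf
      _ ≤ 2 ^ tower i (r ^ (2 * i + 4 + 1) * x) := Nat.pow_le_pow_right two_pos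
          (add_mul_tower_le i hx (by have := add_lt_pow_succ hr (m := 2 * i + 4) (by omega); omega))

theorem pow_add_one_pow_le_tower (e : ℕ) {r x : ℕ} (hr : 2 ≤ r) (hx : 1 ≤ x) :
    (r ^ (tower e x + 1) ^ e + 1) ^ (tower e x + 1) ≤ tower (e + 1) (r ^ (2 * e + 3) * x) := by
  set n := tower e x + 1
  calc (r ^ n ^ e + 1) ^ n ≤ ((r + 1) ^ n ^ e) ^ n := by
        gcongr
        simpa using pow_add_pow_le (Nat.zero_le r) zero_le_one (pow_ne_zero e (by positivity))
    _ = (r + 1) ^ (n ^ (e + 1)) := by rw [← pow_mul, pow_succ]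
    _ ≤ (2 ^ r) ^ (n ^ (e + 1)) := Nat.pow_le_pow_left Nat.lt_two_pow_self _
    _ = 2 ^ (r * n ^ (e + 1)) := (pow_mul 2 r _).symm
    _ ≤ 2 ^ tower e (r ^ (2 * e + 3) * x) :=
        Nat.pow_le_pow_right two_pos (mul_tower_add_one_pow_le e hr hx)

open Finset

variable {α : Type*}

def IsColoring (C : Finset α → ℕ) (d r : ℕ) (A : Finset α) : Prop :=
  ∀ s ⊆ A, s.card = d → C s < r

def IsHomogeneous (C : Finset α → ℕ) (d : ℕ) (H : Finset α) : Prop :=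
  ∀ s ⊆ H, ∀ t ⊆ H, s.card = d → t.card = d → C s = C t

/-- The arrow relation `N → (k)^d_r` for finite subsets of `α`. -/
def Arrows (α : Type*) (N k d r : ℕ) : Prop :=
  ∀ A : Finset α, N ≤ A.card → ∀ C : Finset α → ℕ, IsColoring C d r A →
    ∃ H ⊆ A, k ≤ H.card ∧ IsHomogeneous C d H

theorem IsColoring.mono {C : Finset α → ℕ} {d r : ℕ} {A B : Finset α}
    (hA : IsColoring C d r A) (hBA : B ⊆ A) : IsColoring C d r B :=
  fun s hs => hA s (hs.trans hBA)

theorem Arrows.mono {N M k d r : ℕ} (h : Arrows α N k d r) (hNM : N ≤ M) : Arrows α M k d r :=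
  fun A hA => h A (hNM.trans hA)

theorem arrows_one {r : ℕ} (k : ℕ) (hr : 0 < r) : Arrows α (r * k) k 1 r := by
  intro A hA C hC
  have hmaps : ∀ a ∈ A, C {a} ∈ range r := fun a ha =>
    mem_range.2 (hC {a} (singleton_subset_iff.2 ha) (card_singleton a))
  obtain ⟨c, -, hc⟩ := exists_le_card_fiber_of_mul_le_card_of_maps_to hmaps
    (nonempty_range_iff.2 hr.ne') (by rwa [card_range])
  refine ⟨{a ∈ A | C {a} = c}, filter_subset _ _, hc, fun s hs t ht hs1 ht1 => ?_⟩
  obtain ⟨a, rfl⟩ := card_eq_one.1 hs1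
  obtain ⟨b, rfl⟩ := card_eq_one.1 ht1
  exact (mem_filter.1 (hs (mem_singleton_self a))).2.trans
    (mem_filter.1 (ht (mem_singleton_self b))).2.symm

section LinearOrder

variable [LinearOrder α]

/-- `S` is a reservoir of candidates for the later elements of `X`. -/
def IsEndHomogeneous (C : Finset α → ℕ) (d : ℕ) (X S : Finset α) : Prop :=
  ∀ s ⊆ X, s.card = d → ∀ a ∈ X ∪ S, ∀ b ∈ X ∪ S,
    (∀ z ∈ s, z < a) → (∀ z ∈ s, z < b) → C (insert a s) = C (insert b s)

variable {C : Finset α → ℕ} {d r : ℕ}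

theorem IsEndHomogeneous.exists_insert {L : ℕ} {X S : Finset α} (hr : 0 < r)
    (hXS : ∀ x ∈ X, ∀ y ∈ S, x < y) (hE : IsEndHomogeneous C (d + 1) X S)
    (hC : IsColoring C (d + 2) r (X ∪ S)) (hS : r ^ X.card ^ d * L < S.card) :
    ∃ x ∈ S, ∃ S' ⊆ S, L ≤ S'.card ∧ (∀ y ∈ S', x < y) ∧
      IsEndHomogeneous C (d + 1) (insert x X) S' := by
  have hSne : S.Nonempty := card_pos.1 (by omega)
  set x := S.min' hSne
  have hxS : x ∈ S := S.min'_mem hSne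
  have hxy : ∀ y ∈ S.erase x, x < y := fun y hy =>
    lt_of_le_of_ne (S.min'_le y (mem_of_mem_erase hy)) (ne_of_mem_erase hy).symm
  set I := {s ∈ (insert x X).powersetCard (d + 1) | x ∈ s}
  have hI : I.card ≤ X.card ^ d := by
    have hIsub : I ⊆ (X.powersetCard d).image (insert x) := fun s hs => by
      obtain ⟨hs, hxs⟩ := mem_filter.1 hs
      obtain ⟨hsX, hsd⟩ := mem_powersetCard.1 hs
      refine mem_image.2 ⟨s.erase x, mem_powersetCard.2 ⟨subset_insert_iff.1 hsX, ?_⟩,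
        insert_erase hxs⟩
      rw [card_erase_of_mem hxs, hsd, Nat.add_sub_cancel]
    calc I.card ≤ (X.powersetCard d).card := (card_le_card hIsub).trans card_image_le
      _ ≤ X.card ^ d := by rw [card_powersetCard]; exact Nat.choose_le_pow _ _
  let f : α → I → ℕ := fun y s => C (insert y s)
  have hmaps : ∀ y ∈ S.erase x, f y ∈ Fintype.piFinset fun _ => range r := by
    intro y hy
    refine Fintype.mem_piFinset.2 fun s => mem_range.2 (hC _ ?_ ?_)
    · obtain ⟨hsX, -⟩ := mem_powersetCard.1 (mem_filter.1 s.2).1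
      exact insert_subset (mem_union_right _ (mem_of_mem_erase hy))
        (hsX.trans (insert_subset (mem_union_right _ hxS) subset_union_left))
    · obtain ⟨hsX, hsd⟩ := mem_powersetCard.1 (mem_filter.1 s.2).1
      have hys : y ∉ (s : Finset α) := fun h => by
        rcases mem_insert.1 (hsX h) with rfl | hyX
        · exact (ne_of_mem_erase hy) rfl
        · exact lt_irrefl y (hXS y hyX y (mem_of_mem_erase hy))
      rw [card_insert_of_notMem hys, hsd]
  have hcard : (Fintype.piFinset fun _ : I => range r).card * L ≤ (S.erase x).card := by
    rw [Fintype.card_piFinset, card_erase_of_mem hxS]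
    simp only [card_range, prod_const, card_univ, Fintype.card_coe]
    have := Nat.mul_le_mul_right L (Nat.pow_le_pow_right hr hI)
    omega
  obtain ⟨c, -, hc⟩ := exists_le_card_fiber_of_mul_le_card_of_maps_to hmaps
    ⟨fun _ => 0, Fintype.mem_piFinset.2 fun _ => mem_range.2 hr⟩ hcard
  set S' := {y ∈ S.erase x | f y = c}
  refine ⟨x, hxS, S', (filter_subset _ _).trans (erase_subset _ _), hc,
    fun y hy => hxy y (mem_of_mem_filter y hy), ?_⟩
  intro s hs hsd a ha b hb hsa hsb
  by_cases hxs : x ∈ s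
  · have hmem : ∀ a ∈ insert x X ∪ S', (∀ z ∈ s, z < a) → f a = c := fun a ha hsa => by
      rcases mem_union.1 ha with ha | ha
      · rcases mem_insert.1 ha with rfl | haX
        · exact absurd (hsa _ hxs) (lt_irrefl _)
        · exact absurd (hXS a haX x hxS) (hsa x hxs).not_gt
      · exact (mem_filter.1 ha).2
    have hsI : s ∈ I := mem_filter.2 ⟨mem_powersetCard.2 ⟨hs, hsd⟩, hxs⟩
    exact congrFun ((hmem a ha hsa).trans (hmem b hb hsb).symm) ⟨s, hsI⟩
  · have hsub : insert x X ∪ S' ⊆ X ∪ S := union_subset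
      (insert_subset (mem_union_right _ hxS) subset_union_left)
      ((filter_subset _ _).trans ((erase_subset _ _).trans subset_union_right))
    exact hE s ((subset_insert_iff_of_notMem hxs).1 hs) hsd a (hsub ha) b (hsub hb) hsa hsb

/-- The `+ 1` pays for the candidate that moves into `X` at each step. -/
theorem IsEndHomogeneous.exists_card_eq {n : ℕ} (hr : 0 < r) (j : ℕ) :
    ∀ X S : Finset α, X.card + j ≤ n → (∀ x ∈ X, ∀ y ∈ S, x < y) →
      IsEndHomogeneous C (d + 1) X S → IsColoring C (d + 2) r (X ∪ S) →
      (r ^ n ^ d + 1) ^ j ≤ S.card →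
      ∃ Y ⊆ X ∪ S, Y.card = X.card + j ∧ IsEndHomogeneous C (d + 1) Y ∅ := by
  induction j with
  | zero =>
    intro X S _ _ hE _ _
    refine ⟨X, subset_union_left, rfl, fun s hs hsd a ha b hb => ?_⟩
    rw [union_empty] at ha hb
    exact hE s hs hsd a (mem_union_left _ ha) b (mem_union_left _ hb)
  | succ j ih =>
    intro X S hn hXS hE hC hS
    set q := r ^ n ^ d
    have hq : r ^ X.card ^ d * (q + 1) ^ j < S.card :=
      calc r ^ X.card ^ d * (q + 1) ^ j ≤ q * (q + 1) ^ j :=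
            Nat.mul_le_mul_right _ (Nat.pow_le_pow_right hr (Nat.pow_le_pow_left (by omega) d))
        _ < (q + 1) ^ (j + 1) := by
            rw [pow_succ]; nlinarith [pow_pos (Nat.succ_pos q) j]
        _ ≤ S.card := hS
    obtain ⟨x, hxS, S', hS'S, hS', hxS', hE'⟩ := hE.exists_insert hr hXS hC hq
    have hxX : x ∉ X := fun h => lt_irrefl x (hXS x h x hxS)
    have hsub : insert x X ∪ S' ⊆ X ∪ S := union_subset
      (insert_subset (mem_union_right _ hxS) subset_union_left) (hS'S.trans subset_union_right)
    have hlt : ∀ u ∈ insert x X, ∀ y ∈ S', u < y := fun u hu y hy => by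
      rcases mem_insert.1 hu with rfl | huX
      · exact hxS' y hy
      · exact hXS u huX y (hS'S hy)
    obtain ⟨Y, hY, hYcard, hYE⟩ := ih (insert x X) S'
      (by rw [card_insert_of_notMem hxX]; omega) hlt hE' (hC.mono hsub) hS'
    exact ⟨Y, hY.trans hsub, by rw [hYcard, card_insert_of_notMem hxX]; ring, hYE⟩

theorem IsEndHomogeneous.exists_eq_insert {Y u : Finset α} {M : α}
    (hY : IsEndHomogeneous C (d + 1) Y ∅) (hMY : M ∈ Y) (huY : u ⊆ Y)
    (huM : ∀ z ∈ u, z < M) (hud : u.card = d + 2) :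
    ∃ v ⊆ u, v.card = d + 1 ∧ C u = C (insert M v) := by
  have hune : u.Nonempty := card_pos.1 (by omega)
  set a := u.max' hune
  have hau : a ∈ u := u.max'_mem hune
  have ha : ∀ z ∈ u.erase a, z < a := fun z hz =>
    lt_of_le_of_ne (u.le_max' z (mem_of_mem_erase hz)) (ne_of_mem_erase hz)
  have hcard : (u.erase a).card = d + 1 := by rw [card_erase_of_mem hau, hud]; rfl
  refine ⟨u.erase a, erase_subset _ _, hcard, ?_⟩
  have := hY (u.erase a) ((erase_subset _ _).trans huY) hcard a (mem_union_left _ (huY hau)) M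
    (mem_union_left _ hMY) ha fun z hz => huM z (mem_of_mem_erase hz)
  rwa [insert_erase hau] at this

theorem Arrows.succ {N k : ℕ} (hr : 0 < r) (h : Arrows α N k (d + 1) r) :
    Arrows α ((r ^ (N + 1) ^ d + 1) ^ (N + 1)) k (d + 2) r := by
  intro A hA C hC
  have hE₀ : IsEndHomogeneous C (d + 1) ∅ A := fun s hs hsd => by
    rw [subset_empty.1 hs, card_empty] at hsd
    omega
  obtain ⟨Y, hYA, hYcard, hY⟩ :=
    hE₀.exists_card_eq hr (N + 1) ∅ A (by simp) (by simp) (by rwa [empty_union]) hA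
  rw [empty_union] at hYA
  rw [card_empty, zero_add] at hYcard
  have hYne : Y.Nonempty := card_pos.1 (by omega)
  set M := Y.max' hYne
  have hMY : M ∈ Y := Y.max'_mem hYne
  set X := Y.erase M
  have hM : ∀ z ∈ X, z < M := fun z hz =>
    lt_of_le_of_ne (Y.le_max' z (mem_of_mem_erase hz)) (ne_of_mem_erase hz)
  have hC' : IsColoring (fun s => C (insert M s)) (d + 1) r X := fun s hs hsd =>
    hC _ (insert_subset (hYA hMY) ((hs.trans (erase_subset _ _)).trans hYA))
      (by rw [card_insert_of_notMem fun h => lt_irrefl M (hM M (hs h)), hsd])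
  obtain ⟨H, hHX, hkH, hH⟩ := h X (by rw [card_erase_of_mem hMY, hYcard]; rfl) _ hC'
  have hHY : H ⊆ Y := hHX.trans (erase_subset _ _)
  have hpush : ∀ u ⊆ H, u.card = d + 2 →
      ∃ v ⊆ H, v.card = d + 1 ∧ C u = C (insert M v) := fun u hu hud =>
    have ⟨v, hvu, hvd, hCv⟩ :=
      hY.exists_eq_insert hMY (hu.trans hHY) (fun z hz => hM z (hHX (hu hz))) hud
    ⟨v, hvu.trans hu, hvd, hCv⟩
  refine ⟨H, hHY.trans hYA, hkH, fun u hu v hv hud hvd => ?_⟩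
  obtain ⟨u', hu', hu'd, hCu⟩ := hpush u hu hud
  obtain ⟨v', hv', hv'd, hCv⟩ := hpush v hv hvd
  rw [hCu, hCv]
  exact hH u' hu' v' hv' hu'd hv'd

theorem arrows_tower {r k : ℕ} (e : ℕ) (hr : 2 ≤ r) (hk : 1 ≤ k) :
    Arrows α (tower e (r ^ (e + 1) ^ 2 * k)) k (e + 1) r := by
  induction e with
  | zero => simpa [tower] using arrows_one (α := α) k (by omega : 0 < r)
  | succ e ih =>
    have hx : 1 ≤ r ^ (e + 1) ^ 2 * k := Nat.mul_pos (pow_pos (by omega) _) hk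
    rw [show r ^ (e + 2) ^ 2 * k = r ^ (2 * e + 3) * (r ^ (e + 1) ^ 2 * k) by ring]
    exact (ih.succ (by omega)).mono (pow_add_one_pow_le_tower e hr hx)

end LinearOrder

theorem PHProp_of_arrows {N k d m r : ℕ} (h : Arrows ℕ N k d r) (hk : 0 < k) :
    PHProp (fun _ => k) d m r (N + m) := by
  intro C hC
  obtain ⟨H, hHA, hkH, hH⟩ := h (Icc m (N + m)) (by rw [Nat.card_Icc]; omega) C hC
  exact ⟨H, hHA, card_pos.1 (by omega), hkH, hH⟩

/-- Erdős–Rado upper bounds for the Paris–Harrington function with constant parameter: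
`PH^d_k(m,r) ≤ 2_{d-1}(r^{d²}·k) + m ≤ 2_{d-1}((r^{d²}+1)·k)` for `k ≥ r + m`. -/
theorem PH_constant_upper_bound (d m r k : ℕ) (hd : 1 ≤ d) (hr : 2 ≤ r) (hk : r + m ≤ k) :
    PHnum (fun _ => k) d m r ≤ tower (d-1) (r^(d^2) * k) + m ∧
    PHnum (fun _ => k) d m r ≤ tower (d-1) ((r^(d^2) + 1) * k) := by
  obtain ⟨e, rfl⟩ : ∃ e, d = e + 1 := ⟨d - 1, by omega⟩
  rw [Nat.add_sub_cancel]
  have hle : PHnum (fun _ => k) (e + 1) m r ≤ tower e (r ^ (e + 1) ^ 2 * k) + m :=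
    Nat.sInf_le (PHProp_of_arrows (arrows_tower e hr (by omega)) (by omega))
  refine ⟨hle, hle.trans ?_⟩
  calc tower e (r ^ (e + 1) ^ 2 * k) + m ≤ tower e (r ^ (e + 1) ^ 2 * k) + k := by omega
    _ ≤ tower e (r ^ (e + 1) ^ 2 * k + k) := tower_add_le _ _ _
    _ = tower e ((r ^ (e + 1) ^ 2 + 1) * k) := by ring_nf
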